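/- Let (E,φ) be an L-twisted Higgs bundle of rank 2 on X and let E' be the Hecke modification of E determined by v ∈ ℙ(E_x^∨) at x ∈ X. The following are equivalent: (1) φ restricts to a holomorphic Higgs field φ' : E' → E' ⊗ L; (2) there exists an eigenvalue μ of φ_x such that v(φ(s)) = μ·v(s) for all local sections s of E; (3) there exists an eigenvalue μ of φ_x such that v descends to a well-defined functional on coker(φ_x − μ·id). -/
import Mathlib


/- STATEMENT 1: criterion for the induced Higgs field on a Hecke modification
to be holomorphic.  The question is local at `x`, where (after trivializing
`L` at `x`) the Higgs field has fiber `φₓ : E_x → E_x`, an endomorphism of the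
2-dimensional fiber `E_x ≅ ℂ²`, and `v : E_x → ℂ` is the nonzero functional
defining the Hecke modification `E' = ker (E → ℂ_x)`.

(1) `φ` restricts to a holomorphic Higgs field `φ' : E' → E' ⊗ L`, which
    holds iff the fiber condition `φₓ (ker v) ⊆ ker v` holds;
(2) there is an eigenvalue `μ` of `φₓ` with `v(φₓ s) = μ · v(s)` for all `s`;
(3) there is an eigenvalue `μ` of `φₓ` such that `v` descends to a functional
    on `coker (φₓ − μ·id)`, i.e. `v` kills the range of `φₓ − μ·id`. -/
theorem hecke_higgs_field_holomorphic_iff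
    (φx : Module.End ℂ (Fin 2 → ℂ)) (v : (Fin 2 → ℂ) →ₗ[ℂ] ℂ) (hv : v ≠ 0) :
    -- (1) ↔ (2)
    ((∀ w, v w = 0 → v (φx w) = 0) ↔
      ∃ μ : ℂ, Module.End.HasEigenvalue φx μ ∧ ∀ w, v (φx w) = μ * v w) ∧
    -- (2) ↔ (3)
    ((∃ μ : ℂ, Module.End.HasEigenvalue φx μ ∧ ∀ w, v (φx w) = μ * v w) ↔
      ∃ μ : ℂ, Module.End.HasEigenvalue φx μ ∧
        ∀ w ∈ LinearMap.range (φx - μ • (1 : Module.End ℂ (Fin 2 → ℂ))), v w = 0) := by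
  constructor
  · constructor
    · intro h
      obtain ⟨u, hu⟩ : ∃ u, v u ≠ 0 := by
        by_contra hc; push_neg at hc
        exact hv (LinearMap.ext fun w => hc w)
      set μ := v (φx u) / v u with hμ
      have key : ∀ w, v (φx w) = μ * v w := by
        intro w
        have h0 : v (w - (v w / v u) • u) = 0 := by
          simp [map_sub, map_smul, div_mul_cancel₀ _ hu, smul_eq_mul]
        have h1 := h _ h0
        simp only [map_sub, map_smul, smul_eq_mul] at h1
        have h2 : v (φx w) = (v w / v u) * v (φx u) := sub_eq_zero.mp h1
        rw [h2, hμ]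
        field_simp
      have hA : ∀ w, v ((φx - μ • (1 : Module.End ℂ (Fin 2 → ℂ))) w) = 0 := by
        intro w
        simp [LinearMap.sub_apply, LinearMap.smul_apply, Module.End.one_apply,
          map_sub, map_smul, key, smul_eq_mul, mul_comm]
      have hnotinj : ¬ Function.Injective (φx - μ • (1 : Module.End ℂ (Fin 2 → ℂ))) := by
        intro hinj
        have hsurj := LinearMap.injective_iff_surjective.mp hinj
        obtain ⟨w, hw⟩ := hsurj u
        exact hu (hw ▸ hA w)
      have hker : LinearMap.ker (φx - μ • (1 : Module.End ℂ (Fin 2 → ℂ))) ≠ ⊥ := by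
        intro hb
        exact hnotinj (LinearMap.ker_eq_bot.mp hb)
      obtain ⟨w, hwmem, hw0⟩ := Submodule.ne_bot_iff _ |>.mp hker
      have heig : φx w = μ • w := by
        have := LinearMap.mem_ker.mp hwmem
        simp only [LinearMap.sub_apply, LinearMap.smul_apply, Module.End.one_apply] at this
        exact sub_eq_zero.mp this
      exact ⟨μ, Module.End.hasEigenvalue_of_hasEigenvector
        ⟨Module.End.mem_eigenspace_iff.mpr heig, hw0⟩, key⟩
    · rintro ⟨μ, _, hμ⟩ w hw
      rw [hμ w, hw, mul_zero]
  · constructor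
    · rintro ⟨μ, he, hμ⟩
      refine ⟨μ, he, ?_⟩
      rintro w ⟨u, rfl⟩
      simp [LinearMap.sub_apply, LinearMap.smul_apply, Module.End.one_apply,
        map_sub, map_smul, hμ u, smul_eq_mul, mul_comm]
    · rintro ⟨μ, he, hμ⟩
      refine ⟨μ, he, fun w => ?_⟩
      have := hμ _ ⟨w, rfl⟩
      simp only [LinearMap.sub_apply, LinearMap.smul_apply, Module.End.one_apply,
        map_sub, map_smul, smul_eq_mul] at this
      linear_combination this
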